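/- Suppose μ·p·S₀^{1−q} < (1−q)·β·I₀^p. Then I(t) → 0 as t → ∞, and there exists a finite time T* ∈ (0,∞) such that S(t) = 0 for all t ≥ T*. -/

import Mathlib

/-!
While `S > 0`, the quantity `F = (1-q) β I^p - μ p S^{1-q}` satisfies
`F' = (1-q) p β² S^q I^{2p-1} ≥ 0`, and `-(S^{1-q})' = (1-q) β I^p ≥ F ≥ F(0)`. The hypothesis
says exactly `F(0) > 0`, so `S^{1-q}` would become negative after time `S₀^{1-q} / F(0)`;
hence `S` reaches `0`, and stays there since it is nonincreasing. From then on `I' = -μ I`,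
so `I` decays exponentially.
-/

open Filter Topology Set

theorem monotoneOn_Ici_of_hasDerivAt_nonneg {f f' : ℝ → ℝ} {a : ℝ}
    (hf : ContinuousOn f (Ici a)) (hf' : ∀ t, a < t → HasDerivAt f (f' t) t)
    (hf'₀ : ∀ t, a < t → 0 ≤ f' t) : MonotoneOn f (Ici a) :=
  monotoneOn_of_hasDerivWithinAt_nonneg (convex_Ici a) hf
    (fun t ht ↦ (hf' t (by simpa using ht)).hasDerivWithinAt)
    (fun t ht ↦ hf'₀ t (by simpa using ht))

theorem antitoneOn_Ici_of_hasDerivAt_nonpos {f f' : ℝ → ℝ} {a : ℝ}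
    (hf : ContinuousOn f (Ici a)) (hf' : ∀ t, a < t → HasDerivAt f (f' t) t)
    (hf'₀ : ∀ t, a < t → f' t ≤ 0) : AntitoneOn f (Ici a) :=
  antitoneOn_of_hasDerivWithinAt_nonpos (convex_Ici a) hf
    (fun t ht ↦ (hf' t (by simpa using ht)).hasDerivWithinAt)
    (fun t ht ↦ hf'₀ t (by simpa using ht))

theorem tendsto_zero_of_hasDerivAt_neg_mul {f : ℝ → ℝ} {μ a : ℝ} (hμ : 0 < μ)
    (hf : ContinuousOn f (Ici a)) (hf' : ∀ t, a < t → HasDerivAt f (-μ * f t) t) :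
    Tendsto f atTop (𝓝 0) := by
  set g : ℝ → ℝ := fun t ↦ f t * Real.exp (μ * t)
  have hg : ContinuousOn g (Ici a) := hf.mul (by fun_prop)
  have hg' : ∀ t, a < t → HasDerivAt g 0 t := fun t ht ↦ by
    have := (hf' t ht).mul ((hasDerivAt_id t).const_mul μ).exp
    exact this.congr_deriv (by simp only [id, mul_one]; ring)
  have hg_const : ∀ t, a ≤ t → g t = g a := fun t ht ↦ le_antisymm
    (antitoneOn_Ici_of_hasDerivAt_nonpos hg hg' (fun _ _ ↦ le_rfl) self_mem_Ici ht ht)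
    (monotoneOn_Ici_of_hasDerivAt_nonneg hg hg' (fun _ _ ↦ le_rfl) self_mem_Ici ht ht)
  have hf_eq : (fun t ↦ g a * Real.exp (-(μ * t))) =ᶠ[atTop] f := by
    filter_upwards [eventually_ge_atTop a] with t ht
    rw [← hg_const t ht, mul_assoc, ← Real.exp_add, add_neg_cancel, Real.exp_zero, mul_one]
  refine Tendsto.congr' hf_eq ?_
  simpa using (Real.tendsto_exp_atBot.comp
    (tendsto_neg_atTop_atBot.comp (tendsto_id.const_mul_atTop hμ))).const_mul (g a)

structure IsSISolution (β μ p q : ℝ) (S I : ℝ → ℝ) : Prop where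
  continuousOn_S : ContinuousOn S (Ici 0)
  continuousOn_I : ContinuousOn I (Ici 0)
  S_nonneg : ∀ t, 0 ≤ t → 0 ≤ S t
  I_pos : ∀ t, 0 ≤ t → 0 < I t
  hasDerivAt_S : ∀ t, 0 < t → HasDerivAt S (-(β * S t ^ q * I t ^ p)) t
  hasDerivAt_I : ∀ t, 0 < t → HasDerivAt I (β * S t ^ q * I t ^ p - μ * I t) t

noncomputable def extinctionMargin (β μ p q : ℝ) (S I : ℝ → ℝ) (t : ℝ) : ℝ :=
  (1 - q) * β * I t ^ p - μ * p * S t ^ (1 - q)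

namespace IsSISolution

variable {β μ p q : ℝ} {S I : ℝ → ℝ}

theorem antitoneOn_S (h : IsSISolution β μ p q S I) (hβ : 0 ≤ β) : AntitoneOn S (Ici 0) :=
  antitoneOn_Ici_of_hasDerivAt_nonpos h.continuousOn_S h.hasDerivAt_S fun t ht ↦ by
    have := Real.rpow_nonneg (h.S_nonneg t ht.le) q
    have := Real.rpow_nonneg (h.I_pos t ht.le).le p
    have : 0 ≤ β * S t ^ q * I t ^ p := by positivity
    linarith

theorem S_eq_zero_of_le (h : IsSISolution β μ p q S I) (hβ : 0 ≤ β) {t₀ : ℝ} (ht₀ : 0 ≤ t₀)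
    (hS : S t₀ = 0) (t : ℝ) (ht : t₀ ≤ t) : S t = 0 :=
  le_antisymm (hS ▸ h.antitoneOn_S hβ ht₀ (ht₀.trans ht) ht) (h.S_nonneg t (ht₀.trans ht))

theorem hasDerivAt_S_rpow (h : IsSISolution β μ p q S I) {t : ℝ} (ht : 0 < t) (hSt : 0 < S t) :
    HasDerivAt (fun u ↦ S u ^ (1 - q)) (-((1 - q) * β * I t ^ p)) t := by
  have hS_rpow : S t ^ q * S t ^ (1 - q - 1) = 1 := by
    rw [← Real.rpow_add hSt, show q + (1 - q - 1) = 0 by ring, Real.rpow_zero]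
  refine ((h.hasDerivAt_S t ht).rpow_const (Or.inl hSt.ne')).congr_deriv ?_
  linear_combination (-((1 - q) * β * I t ^ p)) * hS_rpow

theorem hasDerivAt_extinctionMargin (h : IsSISolution β μ p q S I) {t : ℝ} (ht : 0 < t)
    (hSt : 0 < S t) :
    HasDerivAt (extinctionMargin β μ p q S I)
      ((1 - q) * p * β ^ 2 * S t ^ q * I t ^ p * I t ^ (p - 1)) t := by
  have hIt := h.I_pos t ht.le
  have hI_rpow : I t ^ (p - 1) * I t = I t ^ p := by
    rw [← Real.rpow_add_one hIt.ne', sub_add_cancel]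
  have hI := (h.hasDerivAt_I t ht).rpow_const (p := p) (Or.inl hIt.ne')
  refine ((hI.const_mul ((1 - q) * β)).sub
    ((h.hasDerivAt_S_rpow ht hSt).const_mul (μ * p))).congr_deriv ?_
  linear_combination (-(1 - q) * β * p * μ) * hI_rpow

theorem monotoneOn_extinctionMargin (h : IsSISolution β μ p q S I) (hp : 0 ≤ p) (hq : q ≤ 1)
    (hpos : ∀ t, 0 ≤ t → 0 < S t) : MonotoneOn (extinctionMargin β μ p q S I) (Ici 0) := by
  refine monotoneOn_Ici_of_hasDerivAt_nonneg ?_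
    (fun t ht ↦ h.hasDerivAt_extinctionMargin ht (hpos t ht.le)) fun t ht ↦ ?_
  · exact (continuousOn_const.mul (h.continuousOn_I.rpow_const fun _ _ ↦ Or.inr hp)).sub
      (continuousOn_const.mul (h.continuousOn_S.rpow_const fun _ _ ↦ Or.inr (by linarith)))
  · have := Real.rpow_nonneg (h.S_nonneg t ht.le) q
    have := Real.rpow_nonneg (h.I_pos t ht.le).le p
    have := Real.rpow_nonneg (h.I_pos t ht.le).le (p - 1)
    have : 0 ≤ 1 - q := by linarith
    positivity

theorem rpow_S_add_mul_le (h : IsSISolution β μ p q S I) (hμ : 0 ≤ μ) (hp : 0 ≤ p)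
    (hq : q ≤ 1) (hpos : ∀ t, 0 ≤ t → 0 < S t) {t : ℝ} (ht : 0 ≤ t) :
    S t ^ (1 - q) + extinctionMargin β μ p q S I 0 * t ≤ S 0 ^ (1 - q) := by
  set ε := extinctionMargin β μ p q S I 0
  have hanti : AntitoneOn (fun u ↦ S u ^ (1 - q) + ε * u) (Ici 0) := by
    refine antitoneOn_Ici_of_hasDerivAt_nonpos ?_
      (fun u hu ↦ (h.hasDerivAt_S_rpow hu (hpos u hu.le)).add ((hasDerivAt_id u).const_mul ε))
      fun u hu ↦ ?_
    · exact (h.continuousOn_S.rpow_const fun _ _ ↦ Or.inr (by linarith)).add (by fun_prop)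
    · have hε : ε ≤ (1 - q) * β * I u ^ p - μ * p * S u ^ (1 - q) :=
        h.monotoneOn_extinctionMargin hp hq hpos self_mem_Ici hu.le hu.le
      have := Real.rpow_nonneg (h.S_nonneg u hu.le) (1 - q)
      have : 0 ≤ μ * p * S u ^ (1 - q) := by positivity
      simp only [mul_one]
      linarith
  simpa using hanti self_mem_Ici ht ht

theorem exists_S_eq_zero (h : IsSISolution β μ p q S I) (hμ : 0 ≤ μ) (hp : 0 ≤ p) (hq : q ≤ 1)
    (hS₀ : 0 < S 0) (hε : 0 < extinctionMargin β μ p q S I 0) : ∃ t₀, 0 < t₀ ∧ S t₀ = 0 := by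
  by_contra! hne
  have hpos : ∀ t, 0 ≤ t → 0 < S t := fun t ht ↦
    ht.eq_or_lt.elim (fun h0 ↦ h0 ▸ hS₀) fun ht ↦ (h.S_nonneg t ht.le).lt_of_ne' (hne t ht)
  set ε := extinctionMargin β μ p q S I 0
  set T := (S 0 ^ (1 - q) + 1) / ε
  have hT : ε * T = S 0 ^ (1 - q) + 1 := mul_div_cancel₀ _ hε.ne'
  have := Real.rpow_nonneg (h.S_nonneg T (by positivity)) (1 - q)
  have := h.rpow_S_add_mul_le hμ hp hq hpos (t := T) (by positivity)
  linarith

theorem tendsto_I_zero (h : IsSISolution β μ p q S I) (hμ : 0 < μ) (hq : 0 < q) {t₀ : ℝ}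
    (ht₀ : 0 ≤ t₀) (hS : ∀ t, t₀ ≤ t → S t = 0) : Tendsto I atTop (𝓝 0) :=
  tendsto_zero_of_hasDerivAt_neg_mul hμ (h.continuousOn_I.mono (Ici_subset_Ici.2 ht₀))
    fun t ht ↦ (h.hasDerivAt_I t (ht₀.trans_lt ht)).congr_deriv <| by
      rw [hS t ht.le, Real.zero_rpow hq.ne']
      ring

end IsSISolution

theorem stmt6_general (β μ p q S₀ I₀ : ℝ) (S I : ℝ → ℝ)
    (hβ : 0 < β) (hμ : 0 < μ) (hp : 0 < p) (hq0 : 0 < q) (hq1 : q < 1)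
    (hS₀ : 0 < S₀) (hS0 : S 0 = S₀) (hI0 : I 0 = I₀)
    (hScont : ContinuousOn S (Set.Ici 0)) (hIcont : ContinuousOn I (Set.Ici 0))
    (hSnonneg : ∀ t : ℝ, 0 ≤ t → 0 ≤ S t) (hIpos : ∀ t : ℝ, 0 ≤ t → 0 < I t)
    (hSode : ∀ t : ℝ, 0 < t → HasDerivAt S (-(β * S t ^ q * I t ^ p)) t)
    (hIode : ∀ t : ℝ, 0 < t → HasDerivAt I (β * S t ^ q * I t ^ p - μ * I t) t)
    (hlt : μ * p * S₀ ^ (1 - q) < (1 - q) * β * I₀ ^ p) :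
    Tendsto I atTop (𝓝 0) ∧ ∃ Tstar : ℝ, 0 < Tstar ∧ ∀ t : ℝ, Tstar ≤ t → S t = 0 := by
  have h : IsSISolution β μ p q S I := ⟨hScont, hIcont, hSnonneg, hIpos, hSode, hIode⟩
  have hmargin : 0 < extinctionMargin β μ p q S I 0 := by
    rw [extinctionMargin, hS0, hI0]
    linarith
  obtain ⟨t₀, ht₀, hSt₀⟩ := h.exists_S_eq_zero hμ.le hp.le hq1.le (hS0 ▸ hS₀) hmargin
  have hS_zero := h.S_eq_zero_of_le hβ.le ht₀.le hSt₀
  exact ⟨h.tendsto_I_zero hμ hq0 ht₀.le hS_zero, t₀, ht₀, hS_zero⟩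

/-- Proposition 8.1(i) of the paper, strict inequality case: for the SI ODE system
`S' = −β S^q I^p`, `I' = β S^q I^p − μ I` with `β, μ, p > 0`, `q ∈ (0,1)`,
`S(0) = S₀ > 0`, `I(0) = I₀ > 0`, if `μ·p·S₀^{1−q} < (1−q)·β·I₀^p`, then
`I(t) → 0` as `t → ∞` and there is a finite time `T* ∈ (0,∞)` with `S(t) = 0` for all
`t ≥ T*`. -/
theorem stmt6 (β μ p q S₀ I₀ : ℝ) (S I : ℝ → ℝ)
    (hβ : 0 < β) (hμ : 0 < μ) (hp : 0 < p) (hq0 : 0 < q) (hq1 : q < 1)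
    (hS₀ : 0 < S₀) (hI₀ : 0 < I₀) (hS0 : S 0 = S₀) (hI0 : I 0 = I₀)
    (hScont : ContinuousOn S (Set.Ici 0)) (hIcont : ContinuousOn I (Set.Ici 0))
    (hSnonneg : ∀ t : ℝ, 0 ≤ t → 0 ≤ S t) (hIpos : ∀ t : ℝ, 0 ≤ t → 0 < I t)
    (hSode : ∀ t : ℝ, 0 < t → HasDerivAt S (-(β * S t ^ q * I t ^ p)) t)
    (hIode : ∀ t : ℝ, 0 < t → HasDerivAt I (β * S t ^ q * I t ^ p - μ * I t) t)
    (hlt : μ * p * S₀ ^ (1 - q) < (1 - q) * β * I₀ ^ p) :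
    Tendsto I atTop (𝓝 0) ∧ ∃ Tstar : ℝ, 0 < Tstar ∧ ∀ t : ℝ, Tstar ≤ t → S t = 0 :=
  stmt6_general β μ p q S₀ I₀ S I hβ hμ hp hq0 hq1 hS₀ hS0 hI0 hScont hIcont hSnonneg hIpos hSode
    hIode hlt
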